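/- arXiv:math/9604224 — 4 statements merged into one kernel-verified Lean document; each statement's English description precedes it below -/
import Mathlib

section
/- Let φ : ℂ̄ → ℂ̄ be a homeomorphism with φ(D) = D, φ(∞) = ∞, and suppose there is an increasing function Φ : (0,∞) → (0,∞) such that for all distinct points α,β,γ,δ, the cross ratio satisfies |φ(α),φ(β),φ(γ),φ(δ)| ≤ Φ(|α,β,γ,δ|). Then for every y ∈ ∂D, 1 < a < ∞, and z ∈ Cone(y, a), we have φ(z) ∈ Cone(φ(y), Φ(a)). -/
/-- Cross ratio of four (finite) points of the plane:
`|α,β,γ,δ| = (|α−γ|/|α−δ|)·(|β−δ|/|β−γ|)`. -/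
noncomputable def crossRatio (a b c d : ℂ) : ℝ :=
  (‖a - c‖ / ‖a - d‖) * (‖b - d‖ / ‖b - c‖)

/-- Cross ratio with fourth point `∞`: `|α,β,γ,∞| = |α−γ|/|β−γ|`. -/
noncomputable def crossRatioInf (a b c : ℂ) : ℝ :=
  ‖a - c‖ / ‖b - c‖

/-- The non-tangential cone on `y` with parameter `b`. -/
def Cone (y : ℂ) (b : ℝ) : Set ℂ :=
  {z : ℂ | ‖z‖ < 1 ∧ ‖y - z‖ ≤ b * (1 - ‖z‖)}

/-- If `φ` is a homeomorphism of `ℂ̄` fixing `∞` (modelled as a homeomorphism of `ℂ`)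
with `φ(𝔻) = 𝔻`, `φ(∂𝔻) = ∂𝔻`, whose cross-ratio distortion is controlled by an increasing
function `Φ` (for quadruples of finite points, and for quadruples with fourth point `∞`,
which is fixed by `φ`), then `φ` maps `Cone(y,a)` into `Cone(φ(y), Φ(a))` for every
`y ∈ ∂𝔻` and `1 < a < ∞`. -/
theorem stmt5 (φ : ℂ ≃ₜ ℂ) (Φ : ℝ → ℝ)
    (hΦ : ∀ s t : ℝ, 0 < s → s ≤ t → Φ s ≤ Φ t)
    (hD : φ '' {z : ℂ | ‖z‖ < 1} = {z : ℂ | ‖z‖ < 1})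
    (hS : ∀ z : ℂ, ‖z‖ = 1 → ‖φ z‖ = 1)
    (hcr : ∀ a b c d : ℂ, a ≠ b → a ≠ c → a ≠ d → b ≠ c → b ≠ d → c ≠ d →
      crossRatio (φ a) (φ b) (φ c) (φ d) ≤ Φ (crossRatio a b c d))
    (hcrInf : ∀ a b c : ℂ, a ≠ b → a ≠ c → b ≠ c →
      crossRatioInf (φ a) (φ b) (φ c) ≤ Φ (crossRatioInf a b c)) :
    ∀ y : ℂ, ‖y‖ = 1 → ∀ a : ℝ, 1 < a →
      ∀ z ∈ Cone y a, φ z ∈ Cone (φ y) (Φ a) := by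
  -- First: Φ a ≥ 1 for a ≥ 1.
  intro y hy a ha z hz
  obtain ⟨hz1, hz2⟩ := hz
  have hΦa1 : (1:ℝ) ≤ Φ a := by
    have h02 : (0:ℂ) ≠ 2 := by norm_num
    have h01 : (0:ℂ) ≠ 1 := by norm_num
    have h21 : (2:ℂ) ≠ 1 := by norm_num
    have h211 : (2:ℂ) - 1 = 1 := by norm_num
    have hcri1 : crossRatioInf (0:ℂ) 2 1 = 1 := by
      simp [crossRatioInf, h211]
    have hcri2 : crossRatioInf (2:ℂ) 0 1 = 1 := by
      simp [crossRatioInf, h211]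
    have h1 := hcrInf 0 2 1 h02 h01 h21
    have h2 := hcrInf 2 0 1 h02.symm h21 h01
    rw [hcri1] at h1; rw [hcri2] at h2
    have hne1 : φ (0:ℂ) ≠ φ 1 := fun h => h01 (φ.injective h)
    have hne2 : φ (2:ℂ) ≠ φ 1 := fun h => h21 (φ.injective h)
    have hp1 : 0 < ‖φ 0 - φ 1‖ := by
      rwa [norm_pos_iff, sub_ne_zero]
    have hp2 : 0 < ‖φ 2 - φ 1‖ := by
      rwa [norm_pos_iff, sub_ne_zero]
    have hΦ1 : (1:ℝ) ≤ Φ 1 := by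
      unfold crossRatioInf at h1 h2
      rcases le_total (‖φ 0 - φ 1‖) (‖φ 2 - φ 1‖) with h | h
      · calc (1:ℝ) ≤ ‖φ 2 - φ 1‖ / ‖φ 0 - φ 1‖ :=
              (one_le_div hp1).mpr h
          _ ≤ Φ 1 := h2
      · calc (1:ℝ) ≤ ‖φ 0 - φ 1‖ / ‖φ 2 - φ 1‖ :=
              (one_le_div hp2).mpr h
          _ ≤ Φ 1 := h1
    exact hΦ1.trans (hΦ 1 a one_pos ha.le)
  -- φ z is in the open disc
  have hφz : ‖φ z‖ < 1 := by
    have : φ z ∈ φ '' {z : ℂ | ‖z‖ < 1} := ⟨z, hz1, rfl⟩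
    rw [hD] at this; exact this
  have hφz' : (0:ℝ) < 1 - ‖φ z‖ := by linarith
  -- nearest boundary point to φ z
  set r : ℝ := ‖φ z‖ with hr
  set w' : ℂ := if h : φ z = 0 then 1 else φ z / (r : ℂ) with hw'
  have hw'abs : ‖w'‖ = 1 := by
    by_cases h : φ z = 0
    · simp [hw', h]
    · have hrpos : 0 < r := by rwa [hr, norm_pos_iff]
      rw [hw']
      simp only [h, dif_neg, not_false_iff]
      rw [norm_div, Complex.norm_real, Real.norm_eq_abs, abs_of_pos hrpos, ← hr, div_self hrpos.ne']
  have hw'dist : ‖w' - φ z‖ = 1 - r := by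
    by_cases h : φ z = 0
    · simp [hw', h, hr]
    · have hrpos : 0 < r := by rwa [hr, norm_pos_iff]
      have key : w' - φ z = (((1 - r) / r : ℝ) : ℂ) * φ z := by
        rw [hw']
        simp only [h, dif_neg, not_false_iff]
        have : (r:ℂ) ≠ 0 := by exact_mod_cast hrpos.ne'
        push_cast
        field_simp
      rw [key, norm_mul, Complex.norm_real, Real.norm_eq_abs, ← hr,
        abs_of_nonneg (by positivity : (0:ℝ) ≤ (1 - r)/r), div_mul_cancel₀]
      exact hrpos.ne'
  set w : ℂ := φ.symm w' with hwdef
  have hφw : φ w = w' := φ.apply_symm_apply w'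
  -- w is on the boundary
  have hball : {z : ℂ | ‖z‖ < 1} = Metric.ball (0:ℂ) 1 := by
    ext u; simp [Metric.mem_ball, Complex.dist_eq]
  have hcball : {z : ℂ | ‖z‖ ≤ 1} = Metric.closedBall (0:ℂ) 1 := by
    ext u; simp [Metric.mem_closedBall, Complex.dist_eq]
  have hDc : φ '' {z : ℂ | ‖z‖ ≤ 1} = {z : ℂ | ‖z‖ ≤ 1} := by
    rw [hcball, ← closure_ball (0:ℂ) one_ne_zero, ← hball, φ.image_closure, hD]
  have hwle : ‖w‖ ≤ 1 := by
    have hmem : w' ∈ φ '' {z : ℂ | ‖z‖ ≤ 1} := by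
      rw [hDc]; exact le_of_eq hw'abs
    obtain ⟨u, hu, huw⟩ := hmem
    have : u = w := by
      apply φ.injective; rw [huw, hφw]
    rwa [← this]
  have hwabs : ‖w‖ = 1 := by
    rcases lt_or_eq_of_le hwle with h | h
    · exfalso
      have : φ w ∈ φ '' {z : ℂ | ‖z‖ < 1} := ⟨w, h, rfl⟩
      rw [hD] at this
      simp only [Set.mem_setOf_eq, hφw, hw'abs] at this
      exact lt_irrefl 1 this
    · exact h
  have hwz : 1 - ‖z‖ ≤ ‖w - z‖ := by
    have := norm_sub_norm_le w z
    rw [hwabs] at this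
    exact this
  have hzlt : (0:ℝ) < 1 - ‖z‖ := by linarith
  have hwzpos : 0 < ‖w - z‖ := lt_of_lt_of_le hzlt hwz
  have hyz : y ≠ z := by
    intro h; rw [h] at hy; exact hz1.ne hy
  have hwzne : w ≠ z := by
    intro h; rw [h] at hwabs; exact hz1.ne hwabs
  by_cases hyw : y = w
  · refine ⟨hφz, ?_⟩
    rw [hyw, hφw]
    calc ‖w' - φ z‖ = 1 - r := hw'dist
      _ = 1 * (1 - ‖φ z‖) := by rw [hr]; ring
      _ ≤ Φ a * (1 - ‖φ z‖) :=
          mul_le_mul_of_nonneg_right hΦa1 hφz'.le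
  · refine ⟨hφz, ?_⟩
    have h := hcrInf y w z hyw hyz hwzne
    have hs_pos : 0 < crossRatioInf y w z := by
      unfold crossRatioInf
      apply div_pos
      · rwa [norm_pos_iff, sub_ne_zero]
      · exact hwzpos
    have hs_le : crossRatioInf y w z ≤ a := by
      unfold crossRatioInf
      rw [div_le_iff₀ hwzpos]
      calc ‖y - z‖ ≤ a * (1 - ‖z‖) := hz2
        _ ≤ a * ‖w - z‖ :=
            mul_le_mul_of_nonneg_left hwz (by linarith)
    have h2 := h.trans (hΦ _ a hs_pos hs_le)
    unfold crossRatioInf at h2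
    rw [hφw, hw'dist] at h2
    rw [div_le_iff₀ (by linarith : (0:ℝ) < 1 - r)] at h2
    exact h2
end

section
/- Suppose I is a subarc of an orthocircular arc in the unit disc (an arc of a circle meeting the unit circle at right angles), and suppose the hyperbolic length of I satisfies 1/r ≤ ℓ_hyp(I) ≤ r for some r ≥ 1. Then the Euclidean length of I satisfies (1/(2r))·(1 − |z₁|) ≤ |I| ≤ 2r·e^r·(1 − |z₁|), where z₁ is the endpoint of I closest to the unit circle. -/
open Set

private lemma sq_between {a b x : ℝ} (h1 : a ≤ x) (h2 : x ≤ b) (h3 : a^2 ≤ b^2) :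
    x^2 ≤ b^2 := by
  rcases le_total 0 x with hx | hx
  · have hb : 0 ≤ b := le_trans hx h2
    nlinarith
  · nlinarith

lemma arc_abs_le (γ : ℝ → ℂ) (hcont : ContinuousOn γ (Icc 0 1))
    (hinj : Set.InjOn γ (Set.Icc 0 1))
    (hD : ∀ t ∈ Set.Icc (0:ℝ) 1, ‖γ t‖ < 1)
    (c : ℂ) (ρ : ℝ) (hρ : 0 < ρ) (hc : ‖c‖ ^ 2 = 1 + ρ ^ 2)
    (hcirc : ∀ t ∈ Set.Icc (0:ℝ) 1, ‖γ t - c‖ = ρ)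
    (hend : ‖γ 0‖ ≤ ‖γ 1‖) :
    ∀ t ∈ Set.Icc (0:ℝ) 1, ‖γ t‖ ≤ ‖γ 1‖ := by
  have habs2 : ∀ z : ℂ, ‖z‖ ^ 2 = z.re ^ 2 + z.im ^ 2 := fun z => by
    rw [Complex.sq_norm, Complex.normSq_apply]; ring
  set u : ℝ → ℝ := fun t => (γ t).re * c.re + (γ t).im * c.im with hu
  set v : ℝ → ℝ := fun t => (γ t).im * c.re - (γ t).re * c.im with hv
  have hcsq : c.re ^ 2 + c.im ^ 2 = 1 + ρ ^ 2 := by rw [← habs2, hc]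
  -- basic identities on the arc
  have key : ∀ t ∈ Set.Icc (0:ℝ) 1,
      (γ t).re ^ 2 + (γ t).im ^ 2 = 2 * u t - 1 ∧
      v t ^ 2 = (1 + ρ^2)^2 - (1 + ρ^2) - ((1 + ρ^2) - u t)^2 ∧ u t < 1 := by
    intro t ht
    have h1 : ((γ t).re - c.re) ^ 2 + ((γ t).im - c.im) ^ 2 = ρ ^ 2 := by
      have h2 : ‖γ t - c‖ ^ 2 = ρ ^ 2 := by rw [hcirc t ht]
      rw [habs2] at h2
      simp only [Complex.sub_re, Complex.sub_im] at h2
      linarith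
    have hd : (γ t).re ^ 2 + (γ t).im ^ 2 < 1 := by
      have h3 := hD t ht
      have h2 : ‖γ t‖ ^ 2 < 1 := by
        nlinarith [norm_nonneg (γ t)]
      rwa [habs2] at h2
    have hA : (γ t).re ^ 2 + (γ t).im ^ 2 = 2 * u t - 1 := by
      simp only [hu]; nlinarith [h1, hcsq]
    refine ⟨hA, ?_, by nlinarith⟩
    have hprod : u t ^ 2 + v t ^ 2 = ((γ t).re ^ 2 + (γ t).im ^ 2) * (c.re ^ 2 + c.im ^ 2) := by
      simp only [hu, hv]; ring
    nlinarith [hprod, hA, hcsq]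
  -- comparison: v s ^ 2 ≤ v t ^ 2 ↔ u s ≤ u t
  have hRp : (1:ℝ) ≤ 1 + ρ ^ 2 := by nlinarith
  have comp : ∀ s ∈ Set.Icc (0:ℝ) 1, ∀ t ∈ Set.Icc (0:ℝ) 1,
      (v s ^ 2 ≤ v t ^ 2 ↔ u s ≤ u t) := by
    intro s hs t ht
    obtain ⟨-, hvs, hus⟩ := key s hs
    obtain ⟨-, hvt, hut⟩ := key t ht
    constructor
    · intro h; nlinarith
    · intro h; nlinarith
  -- v is injective on Icc 0 1
  have hvinj : Set.InjOn v (Set.Icc 0 1) := by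
    intro s hs t ht hst
    have h1 : u s = u t := by
      have h := comp s hs t ht
      have h' := comp t ht s hs
      rw [hst] at h h'
      have := h.mp le_rfl
      have := h'.mp le_rfl
      linarith
    have hcne : c.re ^ 2 + c.im ^ 2 ≠ 0 := by nlinarith
    have hre : (γ s).re = (γ t).re := by
      have e1 : (γ s).re * (c.re ^ 2 + c.im ^ 2) = u s * c.re - v s * c.im := by
        simp only [hu, hv]; ring
      have e2 : (γ t).re * (c.re ^ 2 + c.im ^ 2) = u t * c.re - v t * c.im := by
        simp only [hu, hv]; ring
      have e3 : (γ s).re * (c.re ^ 2 + c.im ^ 2) = (γ t).re * (c.re ^ 2 + c.im ^ 2) := by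
        rw [e1, e2, h1, hst]
      exact mul_right_cancel₀ hcne e3
    have him : (γ s).im = (γ t).im := by
      have e1 : (γ s).im * (c.re ^ 2 + c.im ^ 2) = u s * c.im + v s * c.re := by
        simp only [hu, hv]; ring
      have e2 : (γ t).im * (c.re ^ 2 + c.im ^ 2) = u t * c.im + v t * c.re := by
        simp only [hu, hv]; ring
      have e3 : (γ s).im * (c.re ^ 2 + c.im ^ 2) = (γ t).im * (c.re ^ 2 + c.im ^ 2) := by
        rw [e1, e2, h1, hst]
      exact mul_right_cancel₀ hcne e3
    exact hinj hs ht (Complex.ext hre him)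
  have hvcont : ContinuousOn v (Set.Icc 0 1) := by
    apply ContinuousOn.sub
    · exact (Complex.continuous_im.comp_continuousOn hcont).mul continuousOn_const
    · exact (Complex.continuous_re.comp_continuousOn hcont).mul continuousOn_const
  have h01 : (0:ℝ) ∈ Set.Icc (0:ℝ) 1 := by constructor <;> norm_num
  have h11 : (1:ℝ) ∈ Set.Icc (0:ℝ) 1 := by constructor <;> norm_num
  have hu01 : u 0 ≤ u 1 := by
    obtain ⟨hA0, -, -⟩ := key 0 h01
    obtain ⟨hA1, -, -⟩ := key 1 h11
    have hsq : ‖γ 0‖ ^ 2 ≤ ‖γ 1‖ ^ 2 :=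
      pow_le_pow_left₀ (norm_nonneg _) hend 2
    rw [habs2, habs2] at hsq
    linarith
  have hv01 : v 0 ^ 2 ≤ v 1 ^ 2 := (comp 0 h01 1 h11).mpr hu01
  -- conclude using monotonicity of v
  intro t ht
  have hvt2 : v t ^ 2 ≤ v 1 ^ 2 := by
    rcases ContinuousOn.strictMonoOn_of_injOn_Icc' (by norm_num : (0:ℝ) ≤ 1) hvcont hvinj with hm | hm
    · exact sq_between (hm.monotoneOn h01 ht ht.1) (hm.monotoneOn ht h11 ht.2) hv01
    · have h1 : v t ≤ v 0 := hm.antitoneOn h01 ht ht.1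
      have h2 : v 1 ≤ v t := hm.antitoneOn ht h11 ht.2
      have h3 : (-(v t))^2 ≤ (-(v 1))^2 :=
        sq_between (neg_le_neg h1) (neg_le_neg h2) (by simpa using hv01)
      simpa using h3
  have hut : u t ≤ u 1 := (comp t ht 1 h11).mp hvt2
  obtain ⟨hAt, -, -⟩ := key t ht
  obtain ⟨hA1, -, -⟩ := key 1 h11
  have h2 : ‖γ t‖ ^ 2 ≤ ‖γ 1‖ ^ 2 := by
    rw [habs2, habs2]; linarith
  nlinarith [norm_nonneg (γ t), norm_nonneg (γ 1)]


lemma arc_gronwall (γ : ℝ → ℂ) (hγ : ContDiff ℝ 1 γ)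
    (hD : ∀ t ∈ Set.Icc (0:ℝ) 1, ‖γ t‖ < 1) :
    ∀ t ∈ Set.Icc (0:ℝ) 1, 1 - ‖γ t‖ ^ 2 ≤
      Real.exp (∫ s in (0:ℝ)..1, 2 * ‖deriv γ s‖ / (1 - ‖γ s‖ ^ 2)) *
        (1 - ‖γ 1‖ ^ 2) := by
  have habs2 : ∀ z : ℂ, ‖z‖ ^ 2 = z.re ^ 2 + z.im ^ 2 := fun z => by
    rw [Complex.sq_norm, Complex.normSq_apply]; ring
  have hcd : Continuous (deriv γ) := hγ.continuous_deriv le_rfl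
  have hγc : Continuous γ := hγ.continuous
  have hγd : ∀ s, HasDerivAt γ (deriv γ s) s := fun s =>
    ((hγ.differentiable one_ne_zero) s).hasDerivAt
  have hre : ∀ s, HasDerivAt (fun t => (γ t).re) ((deriv γ s).re) s := fun s =>
    (Complex.reCLM.hasFDerivAt.comp_hasDerivAt s (hγd s))
  have him : ∀ s, HasDerivAt (fun t => (γ t).im) ((deriv γ s).im) s := fun s =>
    (Complex.imCLM.hasFDerivAt.comp_hasDerivAt s (hγd s))
  set D : ℝ → ℝ := fun s =>
    2 * ((γ s).re * (deriv γ s).re + (γ s).im * (deriv γ s).im) with hDdef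
  have hAd : ∀ s, HasDerivAt (fun t => ‖γ t‖ ^ 2) (D s) s := by
    intro s
    have h1 : HasDerivAt (fun t => (γ t).re ^ 2 + (γ t).im ^ 2) (D s) s := by
      have := (((hre s).mul (hre s)).add ((him s).mul (him s)))
      refine (this.congr_deriv ?_).congr_of_eventuallyEq (Filter.Eventually.of_forall fun t => ?_)
      · simp only [hDdef]; ring
      · simp only [Pi.add_apply, Pi.mul_apply]; ring
    have h2 : (fun t => ‖γ t‖ ^ 2) = fun t => (γ t).re ^ 2 + (γ t).im ^ 2 := by
      funext t; exact habs2 (γ t)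
    rw [h2]; exact h1
  have hDcont : Continuous D := by
    apply continuous_const.mul
    exact ((Complex.continuous_re.comp hγc).mul (Complex.continuous_re.comp hcd)).add
      ((Complex.continuous_im.comp hγc).mul (Complex.continuous_im.comp hcd))
  have hpos : ∀ s ∈ Set.Icc (0:ℝ) 1, 0 < 1 - ‖γ s‖ ^ 2 := by
    intro s hs
    have h1 := hD s hs
    nlinarith [norm_nonneg (γ s)]
  have hDb : ∀ s ∈ Set.Icc (0:ℝ) 1, |D s| ≤ 2 * ‖deriv γ s‖ := by
    intro s hs
    have h1 : (γ s).re * (deriv γ s).re + (γ s).im * (deriv γ s).im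
        = (γ s * (starRingEnd ℂ) (deriv γ s)).re := by
      simp [Complex.mul_re, Complex.conj_re, Complex.conj_im]
      try ring
    have h2 : |(γ s * (starRingEnd ℂ) (deriv γ s)).re| ≤ ‖γ s‖ * ‖deriv γ s‖ := by
      calc |(γ s * (starRingEnd ℂ) (deriv γ s)).re| ≤ ‖γ s * (starRingEnd ℂ) (deriv γ s)‖ :=
            Complex.abs_re_le_norm _
        _ = ‖γ s‖ * ‖deriv γ s‖ := by
            rw [norm_mul, Complex.norm_conj]
    have h3 : ‖γ s‖ ≤ 1 := (hD s hs).le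
    have h4 : ‖deriv γ s‖ = ‖deriv γ s‖ := rfl
    rw [hDdef, abs_mul, abs_two]
    simp only [h1]
    have := norm_nonneg (deriv γ s)
    nlinarith
  -- continuity of the hyperbolic integrand
  have hnum : Continuous fun s => 2 * ‖deriv γ s‖ := continuous_const.mul hcd.norm
  have hden : Continuous fun s => 1 - ‖γ s‖ ^ 2 :=
    continuous_const.sub ((continuous_norm.comp hγc).pow 2)
  have hhypcont : ContinuousOn (fun s => 2 * ‖deriv γ s‖ / (1 - ‖γ s‖ ^ 2))
      (Set.Icc 0 1) :=
    hnum.continuousOn.div hden.continuousOn (fun s hs => (hpos s hs).ne')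
  have hhypnonneg : ∀ s ∈ Set.Icc (0:ℝ) 1,
      0 ≤ 2 * ‖deriv γ s‖ / (1 - ‖γ s‖ ^ 2) := fun s hs =>
    div_nonneg (by positivity) (hpos s hs).le
  set φ : ℝ → ℝ := fun s => Real.log (1 - ‖γ s‖ ^ 2) with hφdef
  set φ' : ℝ → ℝ := fun s => -D s / (1 - ‖γ s‖ ^ 2) with hφ'def
  have hφd : ∀ s ∈ Set.Icc (0:ℝ) 1, HasDerivAt φ (φ' s) s := by
    intro s hs
    have h1 : HasDerivAt (fun t => 1 - ‖γ t‖ ^ 2) (-D s) s := by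
      exact ((hasDerivAt_const s (1:ℝ)).sub (hAd s)).congr_deriv (by ring)
    exact h1.log (hpos s hs).ne'
  have hφ'cont : ContinuousOn φ' (Set.Icc 0 1) :=
    (hDcont.neg.continuousOn).div hden.continuousOn (fun s hs => (hpos s hs).ne')
  have h11 : (1:ℝ) ∈ Set.Icc (0:ℝ) 1 := by constructor <;> norm_num
  intro t ht
  have huIcc : Set.uIcc t 1 = Set.Icc t 1 := uIcc_of_le ht.2
  have hsub : Set.Icc t 1 ⊆ Set.Icc 0 1 := Icc_subset_Icc ht.1 le_rfl
  have hsub0 : Set.Icc 0 t ⊆ Set.Icc 0 1 := Icc_subset_Icc le_rfl ht.2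
  have heq : ∫ s in t..1, φ' s = φ 1 - φ t := by
    apply intervalIntegral.integral_eq_sub_of_hasDerivAt
    · intro x hx
      exact hφd x (hsub (huIcc ▸ hx))
    · exact ContinuousOn.intervalIntegrable (by rw [huIcc]; exact hφ'cont.mono hsub)
  have hint_t1 : IntervalIntegrable (fun s => 2 * ‖deriv γ s‖ / (1 - ‖γ s‖ ^ 2))
      MeasureTheory.volume t 1 :=
    ContinuousOn.intervalIntegrable (by rw [huIcc]; exact hhypcont.mono hsub)
  have hint_0t : IntervalIntegrable (fun s => 2 * ‖deriv γ s‖ / (1 - ‖γ s‖ ^ 2))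
      MeasureTheory.volume 0 t :=
    ContinuousOn.intervalIntegrable (by rw [uIcc_of_le ht.1]; exact hhypcont.mono hsub0)
  have hmono : ∫ s in t..1, -(2 * ‖deriv γ s‖ / (1 - ‖γ s‖ ^ 2))
      ≤ ∫ s in t..1, φ' s := by
    apply intervalIntegral.integral_mono_on ht.2 hint_t1.neg
      (ContinuousOn.intervalIntegrable (by rw [huIcc]; exact hφ'cont.mono hsub))
    intro s hs
    have hps := hpos s (hsub hs)
    have hd := (abs_le.mp (hDb s (hsub hs))).2
    show -(2 * ‖deriv γ s‖ / (1 - ‖γ s‖ ^ 2))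
        ≤ -D s / (1 - ‖γ s‖ ^ 2)
    rw [← neg_div, div_le_div_iff_of_pos_right hps]
    linarith
  have hsplit : (∫ s in t..1, 2 * ‖deriv γ s‖ / (1 - ‖γ s‖ ^ 2))
      ≤ ∫ s in (0:ℝ)..1, 2 * ‖deriv γ s‖ / (1 - ‖γ s‖ ^ 2) := by
    have hadd := intervalIntegral.integral_add_adjacent_intervals hint_0t hint_t1
    have h0t : 0 ≤ ∫ s in (0:ℝ)..t, 2 * ‖deriv γ s‖ / (1 - ‖γ s‖ ^ 2) :=
      intervalIntegral.integral_nonneg ht.1 (fun s hs => hhypnonneg s (hsub0 hs))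
    linarith
  have hneg : ∫ s in t..1, -(2 * ‖deriv γ s‖ / (1 - ‖γ s‖ ^ 2))
      = -∫ s in t..1, (2 * ‖deriv γ s‖ / (1 - ‖γ s‖ ^ 2)) := by
    exact intervalIntegral.integral_neg
  have hlog : φ t ≤ (∫ s in (0:ℝ)..1, 2 * ‖deriv γ s‖ / (1 - ‖γ s‖ ^ 2)) + φ 1 := by
    rw [hneg] at hmono
    rw [heq] at hmono
    linarith
  calc 1 - ‖γ t‖ ^ 2 = Real.exp (φ t) := by
        rw [hφdef]; exact (Real.exp_log (hpos t ht)).symm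
    _ ≤ Real.exp ((∫ s in (0:ℝ)..1, 2 * ‖deriv γ s‖ / (1 - ‖γ s‖ ^ 2)) + φ 1) :=
        Real.exp_le_exp.mpr hlog
    _ = Real.exp (∫ s in (0:ℝ)..1, 2 * ‖deriv γ s‖ / (1 - ‖γ s‖ ^ 2)) *
        (1 - ‖γ 1‖ ^ 2) := by
        rw [Real.exp_add, hφdef, Real.exp_log (hpos 1 h11)]

/-- Let `I` be a subarc (an injective C¹ path `γ`) of a circle orthogonal to the unit
circle, contained in the open unit disc, with endpoint `z₁ = γ 1` closest to the unit
circle.  If the hyperbolic length of `I` (for `ds = 2|dz|/(1−|z|²)`) lies between `1/r`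
and `r`, then the Euclidean length of `I` satisfies
`(1/(2r))(1−|z₁|) ≤ |I| ≤ 2·r·e^r·(1−|z₁|)`. -/
theorem stmt12 (γ : ℝ → ℂ) (hγ : ContDiff ℝ 1 γ) (hinj : Set.InjOn γ (Set.Icc 0 1))
    (hD : ∀ t ∈ Set.Icc (0:ℝ) 1, ‖γ t‖ < 1)
    (hortho : ∃ c : ℂ, ∃ ρ : ℝ, 0 < ρ ∧ ‖c‖ ^ 2 = 1 + ρ ^ 2 ∧
      ∀ t ∈ Set.Icc (0:ℝ) 1, ‖γ t - c‖ = ρ)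
    (hend : ‖γ 0‖ ≤ ‖γ 1‖)
    (r : ℝ) (hr : 1 ≤ r)
    (hhyp_lo : 1 / r ≤ ∫ t in (0:ℝ)..1, 2 * ‖deriv γ t‖ / (1 - ‖γ t‖ ^ 2))
    (hhyp_hi : (∫ t in (0:ℝ)..1, 2 * ‖deriv γ t‖ / (1 - ‖γ t‖ ^ 2)) ≤ r) :
    (1 / (2 * r)) * (1 - ‖γ 1‖) ≤ (∫ t in (0:ℝ)..1, ‖deriv γ t‖) ∧
    (∫ t in (0:ℝ)..1, ‖deriv γ t‖) ≤ 2 * r * Real.exp r * (1 - ‖γ 1‖) := by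
  obtain ⟨c, ρ, hρ, hc, hcirc⟩ := hortho
  have habs := arc_abs_le γ hγ.continuous.continuousOn hinj hD c ρ hρ hc hcirc hend
  have hgron := arc_gronwall γ hγ hD
  have hr0 : (0:ℝ) < r := lt_of_lt_of_le one_pos hr
  have h11 : (1:ℝ) ∈ Set.Icc (0:ℝ) 1 := by constructor <;> norm_num
  have ha1 : ‖γ 1‖ < 1 := hD 1 h11
  have ha1n : 0 ≤ ‖γ 1‖ := norm_nonneg _
  have hcd : Continuous (deriv γ) := hγ.continuous_deriv le_rfl
  have hγc : Continuous γ := hγ.continuous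
  have hpos : ∀ s ∈ Set.Icc (0:ℝ) 1, 0 < 1 - ‖γ s‖ ^ 2 := by
    intro s hs
    have h1 := hD s hs
    nlinarith [norm_nonneg (γ s)]
  have hhypcont : ContinuousOn (fun s => 2 * ‖deriv γ s‖ / (1 - ‖γ s‖ ^ 2))
      (Set.Icc 0 1) := by
    apply ContinuousOn.div
    · exact (continuous_const.mul hcd.norm).continuousOn
    · exact (continuous_const.sub ((continuous_norm.comp hγc).pow 2)).continuousOn
    · exact fun s hs => (hpos s hs).ne'
  have hint : IntervalIntegrable (fun s => 2 * ‖deriv γ s‖ / (1 - ‖γ s‖ ^ 2))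
      MeasureTheory.volume 0 1 :=
    ContinuousOn.intervalIntegrable (by rw [uIcc_of_le (by norm_num : (0:ℝ) ≤ 1)]; exact hhypcont)
  have hnormint : IntervalIntegrable (fun s => ‖deriv γ s‖) MeasureTheory.volume 0 1 :=
    hcd.norm.intervalIntegrable 0 1
  have hsq1 : ∀ s ∈ Set.Icc (0:ℝ) 1,
      1 - ‖γ 1‖ ^ 2 ≤ 1 - ‖γ s‖ ^ 2 := by
    intro s hs
    have h1 := habs s hs
    nlinarith [norm_nonneg (γ s)]
  constructor
  · -- lower bound
    have hptwise : ∀ s ∈ Set.Icc (0:ℝ) 1,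
        ((1 - ‖γ 1‖ ^ 2) / 2) * (2 * ‖deriv γ s‖ / (1 - ‖γ s‖ ^ 2))
          ≤ ‖deriv γ s‖ := by
      intro s hs
      have h1as := hpos s hs
      have hle := hsq1 s hs
      have h1a1 := hpos 1 h11
      have he : ((1 - ‖γ 1‖ ^ 2) / 2) *
          (2 * ‖deriv γ s‖ / (1 - ‖γ s‖ ^ 2))
          = ‖deriv γ s‖ * ((1 - ‖γ 1‖ ^ 2) / (1 - ‖γ s‖ ^ 2)) := by
        field_simp
      rw [he]
      have hq : (1 - ‖γ 1‖ ^ 2) / (1 - ‖γ s‖ ^ 2) ≤ 1 :=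
        (div_le_one h1as).mpr hle
      have := mul_le_mul_of_nonneg_left hq (norm_nonneg (deriv γ s))
      simpa using this
    have h1 : (∫ s in (0:ℝ)..1, ((1 - ‖γ 1‖ ^ 2) / 2) *
        (2 * ‖deriv γ s‖ / (1 - ‖γ s‖ ^ 2))) ≤ ∫ s in (0:ℝ)..1, ‖deriv γ s‖ := by
      apply intervalIntegral.integral_mono_on (by norm_num) (hint.const_mul _) hnormint hptwise
    rw [intervalIntegral.integral_const_mul] at h1
    have h1a1 := hpos 1 h11
    have step1 : ((1 - ‖γ 1‖ ^ 2) / 2) * (1/r)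
        ≤ ((1 - ‖γ 1‖ ^ 2) / 2) *
          (∫ s in (0:ℝ)..1, 2 * ‖deriv γ s‖ / (1 - ‖γ s‖ ^ 2)) :=
      mul_le_mul_of_nonneg_left hhyp_lo (by linarith)
    have step2 : (1 / (2 * r)) * (1 - ‖γ 1‖)
        ≤ ((1 - ‖γ 1‖ ^ 2) / 2) * (1/r) := by
      have e1 : (1 / (2 * r)) * (1 - ‖γ 1‖)
          = (1 - ‖γ 1‖) / (2 * r) := by ring
      have e2 : ((1 - ‖γ 1‖ ^ 2) / 2) * (1/r)
          = (1 - ‖γ 1‖ ^ 2) / (2 * r) := by ring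
      rw [e1, e2]
      gcongr
      nlinarith
    linarith
  · -- upper bound
    have hexp : Real.exp (∫ s in (0:ℝ)..1, 2 * ‖deriv γ s‖ / (1 - ‖γ s‖ ^ 2))
        ≤ Real.exp r := Real.exp_le_exp.mpr hhyp_hi
    have hptwise : ∀ s ∈ Set.Icc (0:ℝ) 1, ‖deriv γ s‖ ≤
        (Real.exp r * (1 - ‖γ 1‖)) *
          (2 * ‖deriv γ s‖ / (1 - ‖γ s‖ ^ 2)) := by
      intro s hs
      have h1as := hpos s hs
      have hg := hgron s hs
      have hub : 1 - ‖γ s‖ ^ 2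
          ≤ Real.exp r * (2 * (1 - ‖γ 1‖)) := by
        have h2 : 1 - ‖γ 1‖ ^ 2 ≤ 2 * (1 - ‖γ 1‖) := by nlinarith
        have h3 : Real.exp (∫ s in (0:ℝ)..1, 2 * ‖deriv γ s‖ / (1 - ‖γ s‖ ^ 2))
            * (1 - ‖γ 1‖ ^ 2) ≤ Real.exp r * (2 * (1 - ‖γ 1‖)) := by
          have h4 := hpos 1 h11
          nlinarith [Real.exp_pos (∫ s in (0:ℝ)..1,
            2 * ‖deriv γ s‖ / (1 - ‖γ s‖ ^ 2)), Real.exp_pos r]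
        linarith
      have he : (Real.exp r * (1 - ‖γ 1‖)) *
          (2 * ‖deriv γ s‖ / (1 - ‖γ s‖ ^ 2))
          = (Real.exp r * (1 - ‖γ 1‖) * (2 * ‖deriv γ s‖))
            / (1 - ‖γ s‖ ^ 2) := by ring
      rw [he, le_div_iff₀ h1as]
      nlinarith [norm_nonneg (deriv γ s), Real.exp_pos r]
    have h1 : (∫ s in (0:ℝ)..1, ‖deriv γ s‖) ≤ ∫ s in (0:ℝ)..1,
        (Real.exp r * (1 - ‖γ 1‖)) *
          (2 * ‖deriv γ s‖ / (1 - ‖γ s‖ ^ 2)) := by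
      apply intervalIntegral.integral_mono_on (by norm_num) hnormint (hint.const_mul _) hptwise
    rw [intervalIntegral.integral_const_mul] at h1
    have step1 : (Real.exp r * (1 - ‖γ 1‖)) *
        (∫ s in (0:ℝ)..1, 2 * ‖deriv γ s‖ / (1 - ‖γ s‖ ^ 2))
        ≤ (Real.exp r * (1 - ‖γ 1‖)) * r := by
      apply mul_le_mul_of_nonneg_left hhyp_hi
      have := Real.exp_pos r
      nlinarith
    have step2 : (Real.exp r * (1 - ‖γ 1‖)) * r
        ≤ 2 * r * Real.exp r * (1 - ‖γ 1‖) := by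
      have hnn : 0 ≤ Real.exp r * (1 - ‖γ 1‖) * r :=
        mul_nonneg (mul_nonneg (Real.exp_pos r).le (by linarith)) hr0.le
      linarith
    linarith
end

section
/- Let Ω = ℂ̄ ∖ K where K ⊂ [0,1] is the ternary Cantor set, with hyperbolic density satisfying λ_Ω(w) ≥ c_Ω/dist(w, K) for a constant c_Ω > 0. Then any two distinct components L, L' of ℝ̄ ∖ K are uniformly hyperbolically separated: every path γ in Ω joining L to L' has hyperbolic length at least c_Ω/2. -/
open Set

/-- The classical middle-thirds Cantor set. -/
noncomputable def cantorK : Set ℝ :=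
  {x : ℝ | ∃ a : ℕ → ℝ, (∀ n, a n = 0 ∨ a n = 2) ∧ x = ∑' n, a n / 3 ^ (n + 1)}

/-- The Cantor set viewed as a subset of `ℂ`. -/
noncomputable def cantorKC : Set ℂ := (fun x : ℝ => (x : ℂ)) '' cantorK

lemma cantorK_compact : IsCompact cantorK := by
  have hC : IsCompact {a : ℕ → ℝ | ∀ n, a n = 0 ∨ a n = 2} := by
    have he : {a : ℕ → ℝ | ∀ n, a n = 0 ∨ a n = 2}
        = Set.pi Set.univ (fun _ : ℕ => ({0, 2} : Set ℝ)) := by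
      ext a; simp [Set.mem_pi, Set.mem_insert_iff]
    rw [he]
    exact isCompact_univ_pi fun _ =>
      ((Set.finite_singleton (2:ℝ)).insert 0).isCompact
  have hg : Continuous (fun a : ℕ → ℝ => ∑' n, max 0 (min (a n) 2) / 3 ^ (n + 1)) := by
    apply continuous_tsum (u := fun n : ℕ => 2 / 3 ^ (n + 1))
    · intro n
      exact (continuous_const.max ((continuous_apply n).min continuous_const)).div_const _
    · have h := (summable_geometric_of_lt_one (by norm_num : (0:ℝ) ≤ 1/3)
        (by norm_num : (1/3:ℝ) < 1)).mul_left (2/3)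
      refine h.congr fun n => ?_
      field_simp [pow_succ]
      rw [pow_succ, ← mul_assoc, ← mul_pow]; norm_num
    · intro n a
      rw [Real.norm_eq_abs, abs_div, abs_of_nonneg (le_max_left _ _), abs_of_nonneg (by positivity)]
      gcongr
      exact max_le (by norm_num) (min_le_right _ _)
  have himg : cantorK
      = (fun a : ℕ → ℝ => ∑' n, max 0 (min (a n) 2) / 3 ^ (n + 1)) ''
        {a : ℕ → ℝ | ∀ n, a n = 0 ∨ a n = 2} := by
    ext x
    constructor
    · rintro ⟨a, ha, rfl⟩
      refine ⟨a, ha, ?_⟩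
      refine tsum_congr fun n => ?_
      rcases ha n with h | h <;> rw [h] <;> norm_num
    · rintro ⟨a, ha, rfl⟩
      refine ⟨a, ha, ?_⟩
      refine (tsum_congr fun n => ?_).symm
      rcases ha n with h | h <;> rw [h] <;> norm_num
  rw [himg]
  exact hC.image hg

lemma cantorK_nonempty : cantorK.Nonempty := by
  refine ⟨0, fun _ => 0, fun _ => Or.inl rfl, ?_⟩
  simp

lemma cantorKC_isClosed : IsClosed cantorKC :=
  (cantorK_compact.image Complex.continuous_ofReal).isClosed

lemma cantorKC_nonempty : cantorKC.Nonempty :=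
  cantorK_nonempty.image _

lemma auxLB (cΩ : ℝ) (hcΩ : 0 < cΩ) (lam : ℂ → ℝ)
    (hlam : ∀ w : ℂ, w ∉ cantorKC → cΩ / Metric.infDist w cantorKC ≤ lam w)
    (hcont : ContinuousOn lam cantorKCᶜ)
    (γ : ℝ → ℂ) (hγ : ContDiff ℝ 1 γ)
    (havoid : ∀ t ∈ Set.Icc (0:ℝ) 1, γ t ∉ cantorKC)
    (hdist : 2 * Metric.infDist (γ 0) cantorKC ≤ ‖γ 1 - γ 0‖) :
    cΩ / 2 ≤ ∫ t in (0:ℝ)..1, lam (γ t) * ‖deriv γ t‖ := by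
  set d : ℝ → ℝ := fun t => Metric.infDist (γ t) cantorKC with hd_def
  have hdpos : ∀ t ∈ Set.Icc (0:ℝ) 1, 0 < d t := fun t ht =>
    (cantorKC_isClosed.notMem_iff_infDist_pos cantorKC_nonempty).1 (havoid t ht)
  have hd0 : 0 < d 0 := hdpos 0 (by norm_num)
  set f : ℝ → ℝ := fun t => ‖deriv γ t‖ with hf_def
  have hfc : Continuous f := (hγ.continuous_deriv le_rfl).norm
  have hfnn : ∀ t, 0 ≤ f t := fun t => norm_nonneg _
  set s : ℝ → ℝ := fun t => ∫ u in (0:ℝ)..t, f u with hs_def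
  have hs : ∀ t, HasDerivAt s (f t) t := fun t =>
    intervalIntegral.integral_hasDerivAt_right (hfc.intervalIntegrable 0 t)
      hfc.aestronglyMeasurable.stronglyMeasurableAtFilter hfc.continuousAt
  have hscont : Continuous s := by
    have : Differentiable ℝ s := fun t => (hs t).differentiableAt
    exact this.continuous
  have hsnn : ∀ t ∈ Set.Icc (0:ℝ) 1, 0 ≤ s t := fun t ht =>
    intervalIntegral.integral_nonneg ht.1 (fun u _ => hfnn u)
  -- fundamental theorem : γ b - γ a = ∫ deriv
  have hftc : ∀ a b : ℝ, γ b - γ a = ∫ u in a..b, deriv γ u := by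
    intro a b
    rw [intervalIntegral.integral_deriv_eq_sub (fun u _ => hγ.differentiable one_ne_zero u)
      ((hγ.continuous_deriv le_rfl).intervalIntegrable a b)]
  have harc : ∀ t ∈ Set.Icc (0:ℝ) 1, ‖γ t - γ 0‖ ≤ s t := by
    intro t ht
    rw [hftc 0 t]
    exact (intervalIntegral.norm_integral_le_integral_norm ht.1)
  -- d t ≤ d 0 + s t on [0,1]
  have hdle : ∀ t ∈ Set.Icc (0:ℝ) 1, d t ≤ d 0 + s t := by
    intro t ht
    have h1 : d t ≤ d 0 + dist (γ t) (γ 0) := Metric.infDist_le_infDist_add_dist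
    rw [dist_eq_norm] at h1
    exact h1.trans (by linarith [harc t ht])
  -- pointwise comparison
  have hpt : ∀ t ∈ Set.Icc (0:ℝ) 1,
      cΩ * (f t / (d 0 + s t)) ≤ lam (γ t) * f t := by
    intro t ht
    have hden : 0 < d 0 + s t := by linarith [hsnn t ht]
    have h1 : cΩ / (d 0 + s t) ≤ cΩ / d t :=
      div_le_div_of_nonneg_left hcΩ.le (hdpos t ht) (hdle t ht)
    have h2 : cΩ / d t ≤ lam (γ t) := hlam (γ t) (havoid t ht)
    calc cΩ * (f t / (d 0 + s t)) = (cΩ / (d 0 + s t)) * f t := by ring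
      _ ≤ lam (γ t) * f t := mul_le_mul_of_nonneg_right (h1.trans h2) (hfnn t)
  -- integrability
  have hIcc : Set.uIcc (0:ℝ) 1 = Set.Icc 0 1 := Set.uIcc_of_le zero_le_one
  have hlhsInt : IntervalIntegrable (fun t => lam (γ t) * f t) MeasureTheory.volume 0 1 := by
    apply ContinuousOn.intervalIntegrable
    rw [hIcc]
    exact ((hcont.comp hγ.continuous.continuousOn havoid).mul hfc.continuousOn)
  have hrhscont : ContinuousOn (fun t => cΩ * (f t / (d 0 + s t))) (Set.Icc (0:ℝ) 1) := by
    apply ContinuousOn.mul continuousOn_const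
    apply ContinuousOn.div hfc.continuousOn (continuous_const.add hscont).continuousOn
    intro t ht
    have := hsnn t ht
    show d 0 + s t ≠ 0
    positivity
  have hrhsInt : IntervalIntegrable (fun t => cΩ * (f t / (d 0 + s t)))
      MeasureTheory.volume 0 1 := by
    apply ContinuousOn.intervalIntegrable
    rwa [hIcc]
  -- FTC for the lower bound
  have hF : ∀ t ∈ Set.uIcc (0:ℝ) 1,
      HasDerivAt (fun t => cΩ * Real.log (d 0 + s t)) (cΩ * (f t / (d 0 + s t))) t := by
    intro t ht
    rw [hIcc] at ht
    have hden : d 0 + s t ≠ 0 := by have := hsnn t ht; positivity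
    exact (((hs t).const_add (d 0)).log hden).const_mul cΩ
  have hval : ∫ t in (0:ℝ)..1, cΩ * (f t / (d 0 + s t))
      = cΩ * Real.log (d 0 + s 1) - cΩ * Real.log (d 0 + s 0) :=
    intervalIntegral.integral_eq_sub_of_hasDerivAt hF hrhsInt
  have hs0 : s 0 = 0 := intervalIntegral.integral_same
  have hs1 : 2 * d 0 ≤ s 1 := le_trans hdist (harc 1 (by norm_num))
  -- lower bound the log difference
  have hlog : cΩ / 2 ≤ cΩ * Real.log (d 0 + s 1) - cΩ * Real.log (d 0 + s 0) := by
    rw [hs0, add_zero]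
    have h3 : (3:ℝ) * d 0 ≤ d 0 + s 1 := by linarith
    have hlog3 : Real.log (3 * d 0) = Real.log 3 + Real.log (d 0) :=
      Real.log_mul (by norm_num) hd0.ne'
    have hmono : Real.log (3 * d 0) ≤ Real.log (d 0 + s 1) :=
      Real.log_le_log (by positivity) h3
    have h2le3 : Real.log 2 ≤ Real.log 3 := Real.log_le_log (by norm_num) (by norm_num)
    have hl2 := Real.log_two_gt_d9
    nlinarith [hcΩ]
  calc cΩ / 2 ≤ ∫ t in (0:ℝ)..1, cΩ * (f t / (d 0 + s t)) := by rw [hval]; exact hlog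
    _ ≤ ∫ t in (0:ℝ)..1, lam (γ t) * f t :=
        intervalIntegral.integral_mono_on zero_le_one hrhsInt hlhsInt hpt

/-- Uniform hyperbolic separation of the components of the complement of the Cantor set:
if the hyperbolic density `λ` of `Ω = ℂ ∖ K` satisfies `λ(w) ≥ c_Ω/dist(w,K)`, then every
(C¹) path `γ` in `Ω` joining two distinct components `L`, `L'` of `ℝ ∖ K` has hyperbolic
length `∫ λ(γ(t))‖γ'(t)‖ dt` at least `c_Ω/2`. -/
theorem stmt13 (cΩ : ℝ) (hcΩ : 0 < cΩ) (lam : ℂ → ℝ)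
    (hlam : ∀ w : ℂ, w ∉ cantorKC → cΩ / Metric.infDist w cantorKC ≤ lam w)
    (hcont : ContinuousOn lam cantorKCᶜ)
    (L L' : Set ℝ)
    (hL : ∃ x ∈ cantorKᶜ, L = connectedComponentIn cantorKᶜ x)
    (hL' : ∃ x ∈ cantorKᶜ, L' = connectedComponentIn cantorKᶜ x)
    (hne : L ≠ L')
    (γ : ℝ → ℂ) (hγ : ContDiff ℝ 1 γ)
    (hγ0 : ∃ u ∈ L, γ 0 = (u : ℂ)) (hγ1 : ∃ v ∈ L', γ 1 = (v : ℂ))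
    (havoid : ∀ t ∈ Set.Icc (0:ℝ) 1, γ t ∉ cantorKC) :
    cΩ / 2 ≤ ∫ t in (0:ℝ)..1, lam (γ t) * ‖deriv γ t‖ := by
  obtain ⟨u, huL, hgu⟩ := hγ0
  obtain ⟨v, hvL', hgv⟩ := hγ1
  obtain ⟨x, hx, rfl⟩ := hL
  obtain ⟨x', hx', rfl⟩ := hL'
  -- there is a point of the Cantor set between u and v
  obtain ⟨k, hkuv, hkK⟩ : ∃ k ∈ Set.uIcc u v, k ∈ cantorK := by
    by_contra h
    push_neg at h
    have hsub : Set.uIcc u v ⊆ cantorKᶜ := fun y hy => h y hy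
    have hvc : v ∈ connectedComponentIn cantorKᶜ u :=
      isPreconnected_uIcc.subset_connectedComponentIn Set.left_mem_uIcc hsub
        Set.right_mem_uIcc
    have h1 : connectedComponentIn cantorKᶜ x = connectedComponentIn cantorKᶜ u :=
      connectedComponentIn_eq huL
    have h2 : connectedComponentIn cantorKᶜ x' = connectedComponentIn cantorKᶜ v :=
      connectedComponentIn_eq hvL'
    exact hne (by rw [h1, h2, connectedComponentIn_eq hvc])
  have hkC : ((k : ℂ)) ∈ cantorKC := ⟨k, hkK, rfl⟩
  -- distances to the Cantor set from the endpoints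
  set d0 := Metric.infDist (γ 0) cantorKC with hd0def
  set d1 := Metric.infDist (γ 1) cantorKC with hd1def
  have hd0le : d0 ≤ |u - k| := by
    rw [hd0def, hgu]
    calc Metric.infDist ((u:ℂ)) cantorKC ≤ dist ((u:ℂ)) ((k:ℂ)) :=
          Metric.infDist_le_dist_of_mem hkC
      _ = |u - k| := by
          rw [dist_eq_norm, ← Complex.ofReal_sub, Complex.norm_real, Real.norm_eq_abs]
  have hd1le : d1 ≤ |v - k| := by
    rw [hd1def, hgv]
    calc Metric.infDist ((v:ℂ)) cantorKC ≤ dist ((v:ℂ)) ((k:ℂ)) :=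
          Metric.infDist_le_dist_of_mem hkC
      _ = |v - k| := by
          rw [dist_eq_norm, ← Complex.ofReal_sub, Complex.norm_real, Real.norm_eq_abs]
  have hnorm : ‖γ 1 - γ 0‖ = |v - u| := by
    rw [hgu, hgv, ← Complex.ofReal_sub, Complex.norm_real, Real.norm_eq_abs]
  have hsum : d0 + d1 ≤ ‖γ 1 - γ 0‖ := by
    rw [hnorm]
    rw [Set.mem_uIcc] at hkuv
    have h1 : |u - k| + |v - k| = |v - u| := by
      rcases hkuv with ⟨h1, h2⟩ | ⟨h1, h2⟩
      · rw [abs_of_nonpos (by linarith : u - k ≤ 0), abs_of_nonneg (by linarith : (0:ℝ) ≤ v - k),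
          abs_of_nonneg (by linarith : (0:ℝ) ≤ v - u)]; ring
      · rw [abs_of_nonneg (by linarith : (0:ℝ) ≤ u - k), abs_of_nonpos (by linarith : v - k ≤ 0),
          abs_of_nonpos (by linarith : v - u ≤ 0)]; ring
    linarith [hd0le, hd1le]
  rcases le_total d0 d1 with hc | hc
  · exact auxLB cΩ hcΩ lam hlam hcont γ hγ havoid (by linarith)
  · -- reverse the path
    set δ : ℝ → ℂ := fun t => γ (1 - t) with hδdef
    have hδ : ContDiff ℝ 1 δ := hγ.comp (contDiff_const.sub contDiff_id)
    have hδavoid : ∀ t ∈ Set.Icc (0:ℝ) 1, δ t ∉ cantorKC := by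
      intro t ht
      exact havoid (1 - t) ⟨by linarith [ht.2], by linarith [ht.1]⟩
    have hδ0 : δ 0 = γ 1 := by simp [hδdef]
    have hδ1 : δ 1 = γ 0 := by simp [hδdef]
    have hδdist : 2 * Metric.infDist (δ 0) cantorKC ≤ ‖δ 1 - δ 0‖ := by
      rw [hδ0, hδ1, norm_sub_rev]
      linarith
    have key := auxLB cΩ hcΩ lam hlam hcont δ hδ hδavoid hδdist
    -- identify the two integrals
    have hder : ∀ t : ℝ, ‖deriv δ t‖ = ‖deriv γ (1 - t)‖ := by
      intro t
      have h1 : HasDerivAt γ (deriv γ (1 - t)) (1 - t) :=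
        (hγ.differentiable one_ne_zero (1 - t)).hasDerivAt
      have h2 : HasDerivAt (fun x : ℝ => 1 - x) (-1 : ℝ) t := by
        simpa using (hasDerivAt_id t).const_sub 1
      have h3 : HasDerivAt δ ((-1 : ℝ) • deriv γ (1 - t)) t := h1.scomp t h2
      rw [h3.deriv, norm_smul]
      simp
    have hint : (∫ t in (0:ℝ)..1, lam (δ t) * ‖deriv δ t‖)
        = ∫ t in (0:ℝ)..1, lam (γ t) * ‖deriv γ t‖ := by
      have : (fun t => lam (δ t) * ‖deriv δ t‖)
          = fun t => lam (γ (1 - t)) * ‖deriv γ (1 - t)‖ := by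
        funext t; rw [hder t]
      rw [this]
      have := intervalIntegral.integral_comp_sub_left
        (a := (0:ℝ)) (b := 1) (fun t => lam (γ t) * ‖deriv γ t‖) 1
      simpa using this
    rw [← hint]
    exact key
end

section
/- Counting Whitney intervals near the Cantor set: Fix N ≥ 1 and let E be a set consisting of a closed construction interval of the ternary Cantor set of length ℓ together with an adjacent gap of length ℓ (so |E| = 2ℓ). With the Whitney decomposition in which each gap L of the Cantor set contains exactly two Whitney intervals of length 3^{-l}|L| for each l ≥ 1, the set E contains exactly 2^k Whitney intervals of length 2^{-1}·3^{-k}|E| for each k ≥ 1, and hence the total length of Whitney intervals in E of length 2^{-1}·3^{-k}|E| equals (1/2)·(2/3)^k·|E|. -/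
open Set

/-- The Cantor set scaled to `[0, ℓ]`. -/
def scaledCantor (ℓ : ℝ) : Set ℝ := (fun t : ℝ => ℓ * t) '' cantorK

/-- The gaps of the scaled Cantor set: the connected components of `(0,ℓ) ∖ ℓK`. -/
def gapsIn (ℓ : ℝ) : Set (Set ℝ) :=
  {L | ∃ x ∈ Set.Ioo 0 ℓ \ scaledCantor ℓ,
    L = connectedComponentIn (Set.Ioo 0 ℓ \ scaledCantor ℓ) x}

/-- The Whitney intervals of a gap `(a,b)`: two intervals of length `3^{-n}(b−a)` for each
`n ≥ 1`, adjoined from the middle outwards. -/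
def whitneyOf (a b : ℝ) : Set (Set ℝ) :=
  {J | ∃ n : ℕ, 1 ≤ n ∧
    (J = Set.Icc (b - 3 ^ (-(n : ℤ) + 1) * (b - a) / 2) (b - 3 ^ (-(n : ℤ)) * (b - a) / 2) ∨
     J = Set.Icc (a + 3 ^ (-(n : ℤ)) * (b - a) / 2) (a + 3 ^ (-(n : ℤ) + 1) * (b - a) / 2))}

/-- The Whitney intervals of `E = [0,ℓ] ∪ [ℓ,2ℓ]`, where `[0,ℓ]` carries a scaled copy of
the Cantor set (with Whitney intervals in each of its gaps) and `(ℓ,2ℓ)` is an adjacent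
gap (with its own Whitney intervals). -/
def whitneyE (ℓ : ℝ) : Set (Set ℝ) :=
  {J | (∃ L ∈ gapsIn ℓ, ∃ a b : ℝ, L = Set.Ioo a b ∧ J ∈ whitneyOf a b) ∨
    J ∈ whitneyOf ℓ (2 * ℓ)}

/-!
The scaled Cantor set satisfies `ℓK = (ℓ/3)K ∪ ((ℓ/3)K + 2ℓ/3)`, so the gaps of `ℓK` are the
middle gap `(ℓ/3, 2ℓ/3)`, the gaps of `(ℓ/3)K` and their translates by `2ℓ/3`. If `c_k(ℓ)` counts
the Whitney intervals of length `3^{-k}ℓ` in the gaps of `ℓK`, then `c_0 = 0` and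
`c_{k+1}(ℓ) = 2 c_k(ℓ/3) + m_k`, where the middle gap contributes `m_0 = 0` and `m_k = 2` for
`k ≥ 1`; hence `c_k + 2 = 2^k`. The adjacent gap `(ℓ, 2ℓ)` contributes the remaining two intervals.
-/

open MeasureTheory

theorem cantorK_eq_cantorSet : cantorK = cantorSet := by
  rw [cantorSet_eq_zero_two_ofDigits]
  ext x
  constructor
  · rintro ⟨a, ha, rfl⟩
    refine ⟨fun n => if a n = 0 then 0 else 2, fun n => by dsimp only; split_ifs <;> decide, ?_⟩
    refine tsum_congr fun n => ?_
    rcases ha n with h | h <;> simp [Real.ofDigitsTerm, h, div_eq_mul_inv]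
  · rintro ⟨d, hd, rfl⟩
    refine ⟨fun n => ((d n : ℕ) : ℝ), fun n => ?_, tsum_congr fun n => ?_⟩
    · have hdn : d n = 0 ∨ d n = 2 := by
        have := hd n
        generalize d n = i at this
        fin_cases i <;> simp_all
      rcases hdn with h | h <;> simp [h]
    · simp [Real.ofDigitsTerm, div_eq_mul_inv]

theorem one_mem_cantorSet : (1 : ℝ) ∈ cantorSet := by
  simp only [cantorSet, mem_iInter]
  intro n
  induction n with
  | zero => simp
  | succ n ih => exact Or.inr ⟨1, ih, by norm_num⟩

theorem scaledCantor_eq_image_cantorSet (ℓ : ℝ) :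
    scaledCantor ℓ = (ℓ * ·) '' cantorSet := by
  rw [scaledCantor, cantorK_eq_cantorSet]

theorem scaledCantor_subset_Icc {ℓ : ℝ} (hℓ : 0 ≤ ℓ) : scaledCantor ℓ ⊆ Icc 0 ℓ := by
  rw [scaledCantor_eq_image_cantorSet]
  rintro _ ⟨t, ht, rfl⟩
  obtain ⟨h0, h1⟩ := cantorSet_subset_unitInterval ht
  exact ⟨by positivity, by nlinarith⟩

theorem scaledCantor_eq_union (ℓ : ℝ) :
    scaledCantor ℓ = scaledCantor (ℓ / 3) ∪ (· + 2 * ℓ / 3) '' scaledCantor (ℓ / 3) := by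
  simp only [scaledCantor_eq_image_cantorSet]
  conv_lhs => rw [cantorSet_eq_union_halves]
  simp only [image_union, image_image]
  congr 1 <;> refine image_congr fun t _ => by ring

theorem third_mem_scaledCantor (ℓ : ℝ) : ℓ / 3 ∈ scaledCantor ℓ := by
  rw [scaledCantor_eq_union]
  exact Or.inl ⟨1, by rw [cantorK_eq_cantorSet]; exact one_mem_cantorSet, by ring⟩

theorem two_thirds_mem_scaledCantor (ℓ : ℝ) : 2 * ℓ / 3 ∈ scaledCantor ℓ := by
  rw [scaledCantor_eq_union]
  exact Or.inr ⟨0, ⟨0, by rw [cantorK_eq_cantorSet]; exact zero_mem_cantorSet, by ring⟩, by ring⟩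

section Components

variable {α : Type*} [TopologicalSpace α]

def components (s : Set α) : Set (Set α) :=
  {L | ∃ x ∈ s, L = connectedComponentIn s x}

theorem connectedComponentIn_inter_of_subset {s t : Set α} {x : α}
    (h : connectedComponentIn s x ⊆ t) :
    connectedComponentIn (s ∩ t) x = connectedComponentIn s x := by
  by_cases hx : x ∈ s
  · exact (connectedComponentIn_mono x inter_subset_left).antisymm
      (isPreconnected_connectedComponentIn.subset_connectedComponentIn
        (mem_connectedComponentIn hx) (subset_inter (connectedComponentIn_subset s x) h))
  · rw [connectedComponentIn_eq_empty hx, connectedComponentIn_eq_empty fun h => hx h.1]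

theorem components_of_isPreconnected {s : Set α} (hs : IsPreconnected s) (hne : s.Nonempty) :
    components s = {s} := by
  ext L
  constructor
  · rintro ⟨x, hx, rfl⟩
    exact hs.connectedComponentIn hx
  · rintro rfl
    obtain ⟨x, hx⟩ := hne
    exact ⟨x, hx, (hs.connectedComponentIn hx).symm⟩

theorem components_image_homeomorph {β : Type*} [TopologicalSpace β] (e : α ≃ₜ β) (s : Set α) :
    components (e '' s) = image e '' components s := by
  ext L
  constructor
  · rintro ⟨_, ⟨x, hx, rfl⟩, rfl⟩
    exact ⟨_, ⟨x, hx, rfl⟩, e.image_connectedComponentIn hx⟩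
  · rintro ⟨_, ⟨x, hx, rfl⟩, rfl⟩
    exact ⟨e x, mem_image_of_mem e hx, e.image_connectedComponentIn hx⟩

variable [LinearOrder α] [OrderClosedTopology α]

theorem connectedComponentIn_subset_Iio {s : Set α} {x c : α} (hc : c ∉ s) (hxc : x < c) :
    connectedComponentIn s x ⊆ Iio c := by
  intro y hy
  by_contra! hcy
  have hx : x ∈ connectedComponentIn s x :=
    mem_connectedComponentIn (connectedComponentIn_nonempty_iff.mp ⟨y, hy⟩)
  exact hc (connectedComponentIn_subset s x
    (isPreconnected_connectedComponentIn.ordConnected.out hx hy ⟨hxc.le, not_lt.mp hcy⟩))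

theorem connectedComponentIn_subset_Ioi {s : Set α} {x c : α} (hc : c ∉ s) (hcx : c < x) :
    connectedComponentIn s x ⊆ Ioi c := by
  intro y hy
  by_contra! hyc
  have hx : x ∈ connectedComponentIn s x :=
    mem_connectedComponentIn (connectedComponentIn_nonempty_iff.mp ⟨y, hy⟩)
  exact hc (connectedComponentIn_subset s x
    (isPreconnected_connectedComponentIn.ordConnected.out hy hx ⟨not_lt.mp hyc, hcx.le⟩))

theorem components_eq_union_of_notMem {s : Set α} {c : α} (hc : c ∉ s) :
    components s = components (s ∩ Iio c) ∪ components (s ∩ Ioi c) := by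
  ext L
  constructor
  · rintro ⟨x, hx, rfl⟩
    rcases lt_or_gt_of_ne (ne_of_mem_of_not_mem hx hc) with hxc | hcx
    · exact Or.inl ⟨x, ⟨hx, hxc⟩,
        (connectedComponentIn_inter_of_subset (connectedComponentIn_subset_Iio hc hxc)).symm⟩
    · exact Or.inr ⟨x, ⟨hx, hcx⟩,
        (connectedComponentIn_inter_of_subset (connectedComponentIn_subset_Ioi hc hcx)).symm⟩
  · rintro (⟨x, ⟨hx, hxc⟩, rfl⟩ | ⟨x, ⟨hx, hcx⟩, rfl⟩)
    · exact ⟨x, hx, connectedComponentIn_inter_of_subset (connectedComponentIn_subset_Iio hc hxc)⟩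
    · exact ⟨x, hx, connectedComponentIn_inter_of_subset (connectedComponentIn_subset_Ioi hc hcx)⟩

end Components

def cantorGapSet (ℓ : ℝ) : Set ℝ := Ioo 0 ℓ \ scaledCantor ℓ

theorem gapsIn_eq_components (ℓ : ℝ) : gapsIn ℓ = components (cantorGapSet ℓ) :=
  rfl

theorem mem_scaledCantor_iff {ℓ x : ℝ} :
    x ∈ scaledCantor ℓ ↔ x ∈ scaledCantor (ℓ / 3) ∨ x - 2 * ℓ / 3 ∈ scaledCantor (ℓ / 3) := by
  rw [scaledCantor_eq_union ℓ, mem_union, image_add_right, mem_preimage, ← sub_eq_add_neg]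

theorem cantorGapSet_inter_Iio {ℓ : ℝ} (hℓ : 0 < ℓ) :
    cantorGapSet ℓ ∩ Iio (ℓ / 3) = cantorGapSet (ℓ / 3) := by
  have hK := @scaledCantor_subset_Icc (ℓ / 3) (by positivity)
  ext x
  simp only [cantorGapSet, mem_inter_iff, mem_sdiff, mem_Ioo, mem_Iio]
  rw [mem_scaledCantor_iff (ℓ := ℓ)]
  constructor
  · rintro ⟨⟨⟨h0, -⟩, hx⟩, h3⟩
    exact ⟨⟨h0, h3⟩, fun h => hx (Or.inl h)⟩
  · rintro ⟨⟨h0, h3⟩, hx⟩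
    refine ⟨⟨⟨h0, by linarith⟩, ?_⟩, h3⟩
    rintro (h | h)
    · exact hx h
    · linarith [(hK h).1]

theorem cantorGapSet_inter_Ioi_inter_Iio {ℓ : ℝ} (hℓ : 0 < ℓ) :
    cantorGapSet ℓ ∩ Ioi (ℓ / 3) ∩ Iio (2 * ℓ / 3) = Ioo (ℓ / 3) (2 * ℓ / 3) := by
  have hK := @scaledCantor_subset_Icc (ℓ / 3) (by positivity)
  ext x
  simp only [cantorGapSet, mem_inter_iff, mem_sdiff, mem_Ioo, mem_Iio, mem_Ioi]
  rw [mem_scaledCantor_iff (ℓ := ℓ)]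
  constructor
  · rintro ⟨⟨-, h1⟩, h2⟩
    exact ⟨h1, h2⟩
  · rintro ⟨h1, h2⟩
    refine ⟨⟨⟨⟨by linarith, by linarith⟩, ?_⟩, h1⟩, h2⟩
    rintro (h | h)
    · linarith [(hK h).2]
    · linarith [(hK h).1]

theorem cantorGapSet_inter_Ioi_inter_Ioi {ℓ : ℝ} (hℓ : 0 < ℓ) :
    cantorGapSet ℓ ∩ Ioi (ℓ / 3) ∩ Ioi (2 * ℓ / 3) = (· + 2 * ℓ / 3) '' cantorGapSet (ℓ / 3) := by
  have hK := @scaledCantor_subset_Icc (ℓ / 3) (by positivity)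
  ext x
  simp only [image_add_right, ← sub_eq_add_neg, cantorGapSet, mem_inter_iff, mem_sdiff, mem_Ioo,
    mem_Ioi, mem_preimage]
  rw [mem_scaledCantor_iff (ℓ := ℓ)]
  constructor
  · rintro ⟨⟨⟨⟨-, h1⟩, hx⟩, -⟩, h2⟩
    exact ⟨⟨by linarith, by linarith⟩, fun h => hx (Or.inr h)⟩
  · rintro ⟨⟨h0, h1⟩, hx⟩
    refine ⟨⟨⟨⟨by linarith, by linarith⟩, ?_⟩, by linarith⟩, by linarith⟩
    rintro (h | h)
    · linarith [(hK h).2]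
    · exact hx h

theorem gapsIn_eq_union {ℓ : ℝ} (hℓ : 0 < ℓ) :
    gapsIn ℓ = gapsIn (ℓ / 3) ∪ {Ioo (ℓ / 3) (2 * ℓ / 3)} ∪
      image (· + 2 * ℓ / 3) '' gapsIn (ℓ / 3) := by
  have h1 : ℓ / 3 ∉ cantorGapSet ℓ := fun h => h.2 (third_mem_scaledCantor ℓ)
  have h2 : 2 * ℓ / 3 ∉ cantorGapSet ℓ ∩ Ioi (ℓ / 3) :=
    fun h => h.1.2 (two_thirds_mem_scaledCantor ℓ)
  rw [gapsIn_eq_components, gapsIn_eq_components, components_eq_union_of_notMem h1, components_eq_union_of_notMem h2, union_assoc,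
    cantorGapSet_inter_Iio hℓ, cantorGapSet_inter_Ioi_inter_Iio hℓ,
    cantorGapSet_inter_Ioi_inter_Ioi hℓ, components_of_isPreconnected isPreconnected_Ioo
      (nonempty_Ioo.mpr (by linarith)), ← Homeomorph.coe_addRight,
    components_image_homeomorph]

section Whitney

variable {a b : ℝ} {n k : ℕ}

def whitneyRight (a b : ℝ) (n : ℕ) : Set ℝ :=
  Icc (b - 3 ^ (-(n : ℤ) + 1) * (b - a) / 2) (b - 3 ^ (-(n : ℤ)) * (b - a) / 2)

def whitneyLeft (a b : ℝ) (n : ℕ) : Set ℝ :=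
  Icc (a + 3 ^ (-(n : ℤ)) * (b - a) / 2) (a + 3 ^ (-(n : ℤ) + 1) * (b - a) / 2)

theorem three_zpow_neg_add_one (n : ℕ) : (3 : ℝ) ^ (-(n : ℤ) + 1) = 3 * 3 ^ (-(n : ℤ)) := by
  rw [zpow_add_one₀ three_ne_zero, mul_comm]

theorem three_zpow_neg_le_third (hn : 1 ≤ n) : (3 : ℝ) ^ (-(n : ℤ)) ≤ 1 / 3 := by
  simpa using zpow_le_zpow_right₀ (by norm_num : (1 : ℝ) ≤ 3) (by omega : -(n : ℤ) ≤ -1)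

theorem volume_whitneyRight (a b : ℝ) (n : ℕ) :
    volume (whitneyRight a b n) = ENNReal.ofReal (3 ^ (-(n : ℤ)) * (b - a)) := by
  rw [whitneyRight, Real.volume_Icc, three_zpow_neg_add_one]
  ring_nf

theorem volume_whitneyLeft (a b : ℝ) (n : ℕ) :
    volume (whitneyLeft a b n) = ENNReal.ofReal (3 ^ (-(n : ℤ)) * (b - a)) := by
  rw [whitneyLeft, Real.volume_Icc, three_zpow_neg_add_one]
  ring_nf

theorem whitneyRight_subset_Ioo (hab : a < b) (hn : 1 ≤ n) : whitneyRight a b n ⊆ Ioo a b := by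
  have := three_zpow_neg_le_third hn
  have : (0 : ℝ) < 3 ^ (-(n : ℤ)) := by positivity
  rw [whitneyRight, three_zpow_neg_add_one]
  exact Icc_subset_Ioo (by nlinarith) (by nlinarith)

theorem whitneyLeft_subset_Ioo (hab : a < b) (hn : 1 ≤ n) : whitneyLeft a b n ⊆ Ioo a b := by
  have := three_zpow_neg_le_third hn
  have : (0 : ℝ) < 3 ^ (-(n : ℤ)) := by positivity
  rw [whitneyLeft, three_zpow_neg_add_one]
  exact Icc_subset_Ioo (by nlinarith) (by nlinarith)

theorem whitneyRight_ne_whitneyLeft (hab : a < b) (hn : 1 ≤ n) :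
    whitneyRight a b n ≠ whitneyLeft a b n := by
  have := three_zpow_neg_le_third hn
  have : (0 : ℝ) < 3 ^ (-(n : ℤ)) := by positivity
  rw [whitneyRight, whitneyLeft, three_zpow_neg_add_one, Ne,
    Icc_eq_Icc_iff (by nlinarith)]
  intro h
  nlinarith [h.1]

theorem subset_Ioo_of_mem_whitneyOf {J : Set ℝ} (hab : a < b) (hJ : J ∈ whitneyOf a b) :
    J ⊆ Ioo a b := by
  obtain ⟨n, hn, rfl | rfl⟩ := hJ
  exacts [whitneyRight_subset_Ioo hab hn, whitneyLeft_subset_Ioo hab hn]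

theorem nonempty_of_mem_whitneyOf {J : Set ℝ} (hab : a < b) (hJ : J ∈ whitneyOf a b) :
    J.Nonempty := by
  obtain ⟨n, -, rfl | rfl⟩ := hJ <;>
  · refine nonempty_Icc.mpr ?_
    rw [three_zpow_neg_add_one]
    have : (0 : ℝ) < 3 ^ (-(n : ℤ)) := by positivity
    nlinarith

theorem volume_eq_of_whitneyOf {J : Set ℝ} (hJ : J = whitneyRight a b n ∨ J = whitneyLeft a b n) :
    volume J = ENNReal.ofReal (3 ^ (-(n : ℤ)) * (b - a)) := by
  rcases hJ with rfl | rfl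
  exacts [volume_whitneyRight a b n, volume_whitneyLeft a b n]

theorem volume_lt_of_mem_whitneyOf {J : Set ℝ} (hab : a < b) (hJ : J ∈ whitneyOf a b) :
    volume J < ENNReal.ofReal (b - a) := by
  obtain ⟨n, hn, hJ⟩ := hJ
  rw [volume_eq_of_whitneyOf hJ, ENNReal.ofReal_lt_ofReal_iff (by linarith)]
  nlinarith [three_zpow_neg_le_third hn]

theorem sep_whitneyOf_volume_sub_eq_empty (hab : a < b) :
    {J ∈ whitneyOf a b | volume J = ENNReal.ofReal (b - a)} = ∅ :=
  eq_empty_of_forall_notMem fun _ ⟨hJ, hvol⟩ =>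
    (volume_lt_of_mem_whitneyOf hab hJ).ne hvol

theorem sep_whitneyOf_volume_eq (hab : a < b) (hk : 1 ≤ k) :
    {J ∈ whitneyOf a b | volume J = ENNReal.ofReal (3 ^ (-(k : ℤ)) * (b - a))} =
      {whitneyRight a b k, whitneyLeft a b k} := by
  ext J
  constructor
  · rintro ⟨⟨n, -, hJ⟩, hvol⟩
    rw [volume_eq_of_whitneyOf hJ, ENNReal.ofReal_eq_ofReal_iff (by positivity) (by positivity),
      mul_left_inj' (sub_pos.mpr hab).ne',
      (zpow_right_injective₀ three_pos (by norm_num : (3 : ℝ) ≠ 1)).eq_iff] at hvol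
    obtain rfl : n = k := by omega
    exact hJ
  · rintro (rfl | rfl)
    exacts [⟨⟨k, hk, Or.inl rfl⟩, volume_whitneyRight a b k⟩,
      ⟨⟨k, hk, Or.inr rfl⟩, volume_whitneyLeft a b k⟩]

theorem encard_sep_whitneyOf_volume_eq (hab : a < b) (hk : 1 ≤ k) :
    {J ∈ whitneyOf a b | volume J = ENNReal.ofReal (3 ^ (-(k : ℤ)) * (b - a))}.encard = 2 := by
  rw [sep_whitneyOf_volume_eq hab hk, encard_pair (whitneyRight_ne_whitneyLeft hab hk)]

theorem image_add_whitneyRight (a b c : ℝ) (n : ℕ) :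
    (· + c) '' whitneyRight a b n = whitneyRight (a + c) (b + c) n := by
  rw [whitneyRight, whitneyRight, image_add_const_Icc]
  congr 1 <;> ring

theorem image_add_whitneyLeft (a b c : ℝ) (n : ℕ) :
    (· + c) '' whitneyLeft a b n = whitneyLeft (a + c) (b + c) n := by
  rw [whitneyLeft, whitneyLeft, image_add_const_Icc]
  congr 1 <;> ring

theorem whitneyOf_add (a b c : ℝ) :
    whitneyOf (a + c) (b + c) = image (· + c) '' whitneyOf a b := by
  ext J
  constructor
  · rintro ⟨n, hn, rfl | rfl⟩
    exacts [⟨_, ⟨n, hn, Or.inl rfl⟩, image_add_whitneyRight a b c n⟩,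
      ⟨_, ⟨n, hn, Or.inr rfl⟩, image_add_whitneyLeft a b c n⟩]
  · rintro ⟨_, ⟨n, hn, rfl | rfl⟩, rfl⟩
    exacts [⟨n, hn, Or.inl (image_add_whitneyRight a b c n)⟩,
      ⟨n, hn, Or.inr (image_add_whitneyLeft a b c n)⟩]

end Whitney

theorem disjoint_of_forall_nonempty_subset {α : Type*} {F G : Set (Set α)} {U V : Set α}
    (hUV : Disjoint U V) (hF : ∀ J ∈ F, J.Nonempty ∧ J ⊆ U) (hG : ∀ J ∈ G, J ⊆ V) :
    Disjoint F G := by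
  refine disjoint_left.mpr fun J hJF hJG => ?_
  obtain ⟨⟨x, hx⟩, hJU⟩ := hF J hJF
  exact disjoint_left.mp hUV (hJU hx) (hG J hJG hx)

theorem Ioo_disjoint_Ioo_of_eq {a b c : ℝ} : Disjoint (Ioo a b) (Ioo b c) :=
  Ioo_disjoint_Ioo.mpr (min_le_of_left_le (le_max_right _ _))

theorem Ioo_eq_Ioo_iff_of_lt {a b c d : ℝ} (hab : a < b) :
    Ioo a b = Ioo c d ↔ a = c ∧ b = d := by
  refine ⟨fun h => ?_, by rintro ⟨rfl, rfl⟩; rfl⟩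
  have hcd : c < d := nonempty_Ioo.mp (h ▸ nonempty_Ioo.mpr hab)
  have h₁ := (Ioo_subset_Ioo_iff hab).mp h.le
  have h₂ := (Ioo_subset_Ioo_iff hcd).mp h.ge
  exact ⟨le_antisymm h₂.1 h₁.1, le_antisymm h₁.2 h₂.2⟩

section WhitneyFamily

variable {G H : Set (Set ℝ)}

def whitneyFamily (G : Set (Set ℝ)) : Set (Set ℝ) :=
  {J | ∃ L ∈ G, ∃ a b : ℝ, L = Ioo a b ∧ J ∈ whitneyOf a b}

theorem whitneyE_eq_union (ℓ : ℝ) :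
    whitneyE ℓ = whitneyFamily (gapsIn ℓ) ∪ whitneyOf ℓ (2 * ℓ) :=
  rfl

theorem whitneyFamily_union : whitneyFamily (G ∪ H) = whitneyFamily G ∪ whitneyFamily H := by
  ext J
  simp only [whitneyFamily, mem_union, mem_ofPred_eq, or_and_right, exists_or]

theorem whitneyFamily_singleton {a b : ℝ} (hab : a < b) :
    whitneyFamily {Ioo a b} = whitneyOf a b := by
  ext J
  constructor
  · rintro ⟨_, rfl, c, d, h, hJ⟩
    obtain ⟨rfl, rfl⟩ := (Ioo_eq_Ioo_iff_of_lt hab).mp h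
    exact hJ
  · exact fun hJ => ⟨_, rfl, a, b, rfl, hJ⟩

theorem whitneyFamily_image_add (G : Set (Set ℝ)) (c : ℝ) :
    whitneyFamily (image (· + c) '' G) = image (· + c) '' whitneyFamily G := by
  ext J
  constructor
  · rintro ⟨_, ⟨L, hL, rfl⟩, a, b, hLab, hJ⟩
    have hL' : L = Ioo (a - c) (b - c) := by
      rw [← preimage_add_const_Ioo, ← hLab, preimage_image_eq _ (add_left_injective c)]
    rw [show a = a - c + c by ring, show b = b - c + c by ring, whitneyOf_add] at hJ
    obtain ⟨J₀, hJ₀, rfl⟩ := hJ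
    exact ⟨J₀, ⟨L, hL, _, _, hL', hJ₀⟩, rfl⟩
  · rintro ⟨J₀, ⟨L, hL, a, b, rfl, hJ₀⟩, rfl⟩
    refine ⟨_, ⟨_, hL, rfl⟩, a + c, b + c, image_add_const_Ioo _ _ _, ?_⟩
    rw [whitneyOf_add]
    exact mem_image_of_mem _ hJ₀

theorem nonempty_subset_of_mem_whitneyFamily {U : Set ℝ} (hG : ∀ L ∈ G, L.Nonempty ∧ L ⊆ U)
    {J : Set ℝ} (hJ : J ∈ whitneyFamily G) : J.Nonempty ∧ J ⊆ U := by
  obtain ⟨L, hL, a, b, rfl, hJ⟩ := hJ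
  obtain ⟨hne, hLU⟩ := hG _ hL
  have hab := nonempty_Ioo.mp hne
  exact ⟨nonempty_of_mem_whitneyOf hab hJ, (subset_Ioo_of_mem_whitneyOf hab hJ).trans hLU⟩

end WhitneyFamily

theorem nonempty_subset_of_mem_gapsIn {ℓ : ℝ} {L : Set ℝ} (hL : L ∈ gapsIn ℓ) :
    L.Nonempty ∧ L ⊆ Ioo 0 ℓ := by
  obtain ⟨x, hx, rfl⟩ := hL
  exact ⟨⟨x, mem_connectedComponentIn hx⟩, (connectedComponentIn_subset _ _).trans sdiff_subset⟩

theorem whitneyFamily_gapsIn_eq_union {ℓ : ℝ} (hℓ : 0 < ℓ) :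
    whitneyFamily (gapsIn ℓ) = whitneyFamily (gapsIn (ℓ / 3)) ∪ whitneyOf (ℓ / 3) (2 * ℓ / 3) ∪
      image (· + 2 * ℓ / 3) '' whitneyFamily (gapsIn (ℓ / 3)) := by
  rw [gapsIn_eq_union hℓ, whitneyFamily_union, whitneyFamily_union,
    whitneyFamily_singleton (by linarith), whitneyFamily_image_add]

def cantorWhitney (k : ℕ) (ℓ : ℝ) : Set (Set ℝ) :=
  {J ∈ whitneyFamily (gapsIn ℓ) | volume J = ENNReal.ofReal (3 ^ (-(k : ℤ)) * ℓ)}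

theorem nonempty_subset_of_mem_cantorWhitney {k : ℕ} {ℓ : ℝ} {J : Set ℝ}
    (hJ : J ∈ cantorWhitney k ℓ) : J.Nonempty ∧ J ⊆ Ioo 0 ℓ :=
  nonempty_subset_of_mem_whitneyFamily (fun _ => nonempty_subset_of_mem_gapsIn) hJ.1

theorem cantorWhitney_zero (ℓ : ℝ) : cantorWhitney 0 ℓ = ∅ := by
  refine eq_empty_of_forall_notMem fun J ⟨⟨L, hL, a, b, hLab, hJ⟩, hvol⟩ => ?_
  obtain ⟨hne, hL0⟩ := nonempty_subset_of_mem_gapsIn hL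
  subst hLab
  have hab := nonempty_Ioo.mp hne
  have hba : b - a ≤ ℓ := by
    have := (Ioo_subset_Ioo_iff hab).mp hL0
    linarith
  have := volume_lt_of_mem_whitneyOf hab hJ
  rw [hvol, Nat.cast_zero, neg_zero, zpow_zero, one_mul] at this
  exact (ENNReal.ofReal_le_ofReal hba).not_gt this

theorem three_zpow_neg_succ_mul (k : ℕ) (ℓ : ℝ) :
    (3 : ℝ) ^ (-((k + 1 : ℕ) : ℤ)) * ℓ = 3 ^ (-(k : ℤ)) * (ℓ / 3) := by
  rw [Nat.cast_succ, neg_add, zpow_add₀ three_ne_zero, zpow_neg_one]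
  ring

theorem sep_volume_image_add (F : Set (Set ℝ)) (c : ℝ) (v : ENNReal) :
    {J ∈ image (· + c) '' F | volume J = v} = image (· + c) '' {J ∈ F | volume J = v} := by
  ext J
  constructor
  · rintro ⟨⟨J₀, hJ₀, rfl⟩, hvol⟩
    exact ⟨J₀, ⟨hJ₀, by simpa [image_add_right] using hvol⟩, rfl⟩
  · rintro ⟨J₀, ⟨hJ₀, hvol⟩, rfl⟩
    exact ⟨mem_image_of_mem _ hJ₀, by simpa [image_add_right] using hvol⟩

theorem cantorWhitney_succ {ℓ : ℝ} (hℓ : 0 < ℓ) (k : ℕ) :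
    cantorWhitney (k + 1) ℓ = cantorWhitney k (ℓ / 3) ∪
      {J ∈ whitneyOf (ℓ / 3) (2 * ℓ / 3) |
        volume J = ENNReal.ofReal (3 ^ (-(k : ℤ)) * (2 * ℓ / 3 - ℓ / 3))} ∪
      image (· + 2 * ℓ / 3) '' cantorWhitney k (ℓ / 3) := by
  rw [cantorWhitney, cantorWhitney, ← sep_volume_image_add, whitneyFamily_gapsIn_eq_union hℓ,
    show 2 * ℓ / 3 - ℓ / 3 = ℓ / 3 by ring, three_zpow_neg_succ_mul]
  ext J
  simp only [mem_union, mem_sep_iff, or_and_right]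
  exact Iff.rfl

theorem encard_cantorWhitney_succ {ℓ : ℝ} (hℓ : 0 < ℓ) (k : ℕ) :
    (cantorWhitney (k + 1) ℓ).encard = 2 * (cantorWhitney k (ℓ / 3)).encard +
      {J ∈ whitneyOf (ℓ / 3) (2 * ℓ / 3) |
        volume J = ENNReal.ofReal (3 ^ (-(k : ℤ)) * (2 * ℓ / 3 - ℓ / 3))}.encard := by
  have hab : ℓ / 3 < 2 * ℓ / 3 := by linarith
  have hleft : ∀ J ∈ cantorWhitney k (ℓ / 3), J.Nonempty ∧ J ⊆ Ioo 0 (ℓ / 3) :=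
    fun J hJ => nonempty_subset_of_mem_cantorWhitney hJ
  have hmid : ∀ J ∈ {J ∈ whitneyOf (ℓ / 3) (2 * ℓ / 3) |
      volume J = ENNReal.ofReal (3 ^ (-(k : ℤ)) * (2 * ℓ / 3 - ℓ / 3))},
      J.Nonempty ∧ J ⊆ Ioo (ℓ / 3) (2 * ℓ / 3) :=
    fun J hJ => ⟨nonempty_of_mem_whitneyOf hab hJ.1, subset_Ioo_of_mem_whitneyOf hab hJ.1⟩
  have hright : ∀ J ∈ image (· + 2 * ℓ / 3) '' cantorWhitney k (ℓ / 3),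
      J ⊆ Ioo (2 * ℓ / 3) ℓ := by
    rintro _ ⟨J, hJ, rfl⟩
    have hJ := (nonempty_subset_of_mem_cantorWhitney hJ).2
    rw [image_subset_iff]
    exact fun x hx => ⟨by linarith [(hJ hx).1], by linarith [(hJ hx).2]⟩
  rw [cantorWhitney_succ hℓ, encard_union_eq, encard_union_eq,
    (image_injective.mpr (add_left_injective _)).encard_image]
  · ring
  · exact disjoint_of_forall_nonempty_subset Ioo_disjoint_Ioo_of_eq hleft fun J hJ => (hmid J hJ).2
  · refine disjoint_union_left.mpr ⟨?_, ?_⟩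
    · exact disjoint_of_forall_nonempty_subset
        (Ioo_disjoint_Ioo_of_eq.mono_right (Ioo_subset_Ioo_left hab.le)) hleft hright
    · exact disjoint_of_forall_nonempty_subset Ioo_disjoint_Ioo_of_eq hmid hright

theorem encard_cantorWhitney_add_two {k : ℕ} (hk : 1 ≤ k) {ℓ : ℝ} (hℓ : 0 < ℓ) :
    (cantorWhitney k ℓ).encard + 2 = 2 ^ k := by
  induction k, hk using Nat.le_induction generalizing ℓ with
  | base =>
    have h := encard_cantorWhitney_succ hℓ 0
    rw [cantorWhitney_zero, Nat.cast_zero, neg_zero, zpow_zero, one_mul,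
      sep_whitneyOf_volume_sub_eq_empty (by linarith)] at h
    simp [h]
  | succ k hk ih =>
    rw [encard_cantorWhitney_succ hℓ, encard_sep_whitneyOf_volume_eq (by linarith) hk, pow_succ,
      ← ih (ℓ := ℓ / 3) (by positivity)]
    ring

/-- `E` (of length `|E| = 2ℓ`) contains exactly `2^k` Whitney intervals of length
`2⁻¹·3^{-k}|E|` for each `k ≥ 1`, and their total length is `(1/2)·(2/3)^k·|E|`. -/
theorem stmt17 (ℓ : ℝ) (hℓ : 0 < ℓ) (k : ℕ) (hk : 1 ≤ k) :
    {J ∈ whitneyE ℓ |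
        MeasureTheory.volume J = ENNReal.ofReal (2⁻¹ * 3 ^ (-(k : ℤ)) * (2 * ℓ))}.ncard
      = 2 ^ k ∧
    (2 ^ k : ℝ) * (2⁻¹ * 3 ^ (-(k : ℤ)) * (2 * ℓ)) = (1 / 2) * (2 / 3) ^ k * (2 * ℓ) := by
  have hlen : (2⁻¹ : ℝ) * 3 ^ (-(k : ℤ)) * (2 * ℓ) = 3 ^ (-(k : ℤ)) * ℓ := by ring
  have hsplit : {J ∈ whitneyE ℓ | volume J = ENNReal.ofReal (3 ^ (-(k : ℤ)) * ℓ)} =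
      cantorWhitney k ℓ ∪
        {J ∈ whitneyOf ℓ (2 * ℓ) | volume J = ENNReal.ofReal (3 ^ (-(k : ℤ)) * (2 * ℓ - ℓ))} := by
    rw [show 2 * ℓ - ℓ = ℓ by ring, whitneyE_eq_union, cantorWhitney]
    ext J
    simp only [mem_union, mem_sep_iff, or_and_right]
    exact Iff.rfl
  have hdisj : Disjoint (cantorWhitney k ℓ)
      {J ∈ whitneyOf ℓ (2 * ℓ) | volume J = ENNReal.ofReal (3 ^ (-(k : ℤ)) * (2 * ℓ - ℓ))} :=
    disjoint_of_forall_nonempty_subset Ioo_disjoint_Ioo_of_eq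
      (fun _ => nonempty_subset_of_mem_cantorWhitney)
      (fun _ hJ => subset_Ioo_of_mem_whitneyOf (by linarith) hJ.1)
  refine ⟨?_, ?_⟩
  · rw [hlen, ncard_def, hsplit, encard_union_eq hdisj,
      encard_sep_whitneyOf_volume_eq (by linarith) hk, encard_cantorWhitney_add_two hk hℓ]
    simp
  · rw [zpow_neg, zpow_natCast, div_pow]
    field_simp
end
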